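/- Let P, Q, E : ℝ → ℂ be functions satisfying, for every w ∈ ℝ: e^{iw/2}(Q(w) − Q(w+2π)) = 1 and Q(w) E(w) conj(P(w)) + Q(w+2π) E(w+2π) conj(P(w+2π)) = 0. If for a given w the quantity D(w) := E(w+2π) conj(P(w+2π)) + E(w) conj(P(w)) is nonzero, then Q(w) = e^{-iw/2} · E(w+2π) · conj(P(w+2π)) / D(w). -/

import Mathlib

/-! With `a = E(w+2π) conj(P(w+2π))` and `b = E(w) conj(P(w))`, the first hypothesis says
`Q(w+2π) = Q(w) - e^{-iw/2}`; substituting this into the orthogonality relation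
`Q(w) b + Q(w+2π) a = 0` leaves the linear equation `Q(w) (a + b) = e^{-iw/2} a`. -/

theorem eq_mul_div_add_of_mul_add_mul_eq_zero {K : Type*} [Field K] {q q' a b c : K}
    (horth : q * b + q' * a = 0) (hdiff : q - q' = c) (hD : a + b ≠ 0) :
    q = c * a / (a + b) := by
  rw [eq_div_iff hD, ← hdiff]
  linear_combination horth

theorem Complex.eq_exp_neg_of_exp_mul_eq_one {z x : ℂ} (h : Complex.exp z * x = 1) :
    x = Complex.exp (-z) := by
  rw [Complex.exp_neg]
  exact eq_inv_of_mul_eq_one_right h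

/-- formula (44) of Theorem 2: if `e^{iw/2}(Q(w) − Q(w+2π)) = 1` and
`Q(w)E(w)conj(P(w)) + Q(w+2π)E(w+2π)conj(P(w+2π)) = 0` for every `w`, then whenever
`D(w) = E(w+2π)conj(P(w+2π)) + E(w)conj(P(w)) ≠ 0` one has
`Q(w) = e^{-iw/2}·E(w+2π)·conj(P(w+2π))/D(w)`. -/
theorem wavelet_symbol_formula (P Q E : ℝ → ℂ)
    (hQ : ∀ w : ℝ,
      Complex.exp (Complex.I * (w : ℂ) / 2) * (Q w - Q (w + 2 * Real.pi)) = 1)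
    (horth : ∀ w : ℝ,
      Q w * E w * (starRingEnd ℂ) (P w) +
        Q (w + 2 * Real.pi) * E (w + 2 * Real.pi) *
          (starRingEnd ℂ) (P (w + 2 * Real.pi)) = 0) :
    ∀ w : ℝ,
      E (w + 2 * Real.pi) * (starRingEnd ℂ) (P (w + 2 * Real.pi)) +
          E w * (starRingEnd ℂ) (P w) ≠ 0 →
      Q w = Complex.exp (-Complex.I * (w : ℂ) / 2) * E (w + 2 * Real.pi) *
          (starRingEnd ℂ) (P (w + 2 * Real.pi)) /
          (E (w + 2 * Real.pi) * (starRingEnd ℂ) (P (w + 2 * Real.pi)) +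
            E w * (starRingEnd ℂ) (P w)) := by
  intro w hD
  have hdiff : Q w - Q (w + 2 * Real.pi) = Complex.exp (-Complex.I * (w : ℂ) / 2) := by
    rw [neg_mul, neg_div]
    exact Complex.eq_exp_neg_of_exp_mul_eq_one (hQ w)
  rw [mul_assoc (Complex.exp _)]
  exact eq_mul_div_add_of_mul_add_mul_eq_zero (by simpa only [mul_assoc] using horth w) hdiff hD
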